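/- arXiv:2203.16435 — 4 statements merged into one kernel-verified Lean document; each statement's English description precedes it below -/
import Mathlib

section
/- Let F ⊆ ℂ be an imaginary quadratic field and let J ∈ GL₃(F) be hermitian of signature (2,1). Then for every nonzero isotropic vector v̄ ∈ F³ for J, there exist a positive rational number β and a matrix T ∈ GL₃(F) such that Tᴴ · J_β · T = J and T · v̄ = e₁, where e₁ is the first standard basis vector of F³. (That is, (V, J) is isomorphic to (F³, J_β) by an isomorphism sending v̄ to the first vector of the canonical basis.) -/
/-!
Since `F/ℚ` is quadratic it is normal, so `F` is stable under complex conjugation, and its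
self-conjugate elements are rational because `F ∩ ℝ` is a proper subfield of a quadratic field.
The hermitian form `⟪x, y⟫ = xᴴ J y` on `F³` is nondegenerate, so `v` has a partner `w` with
`⟪v, w⟫ = 1`, which becomes isotropic after subtracting `⟪w, w⟫ / 2 • v`. The cross product `u`
of the rows `vᴴ J` and `wᴴ J` is orthogonal to `v` and `w`, so in the basis `(v, u, w)` the form
has Gram matrix `J_β` with `β = ⟪u, u⟫ ∈ ℚ`, and `T` is the inverse of this change of basis.
Finally `β > 0`: otherwise `J_β` is negative definite on the plane spanned by `e₁ - e₃` and `e₂`,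
and this plane would meet the plane on which a form of signature `(2,1)` is positive semidefinite.
-/

open Matrix Complex ComplexConjugate

namespace IntermediateField

theorem inf_eq_bot_of_finrank_eq_two {K L : Type*} [Field K] [Field L] [Algebra K L]
    {E M : IntermediateField K L} (hE : Module.finrank K E = 2) (hEM : ¬E ≤ M) : E ⊓ M = ⊥ := by
  have : FiniteDimensional K E := .of_finrank_pos (by omega)
  rw [← finrank_eq_one_iff]
  have hlt : Module.finrank K ↥(E ⊓ M) < 2 := by
    by_contra! h
    exact hEM ((eq_of_le_of_finrank_le inf_le_left (hE ▸ h)).symm ▸ inf_le_right)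
  have : 0 < Module.finrank K ↥(E ⊓ M) := Module.finrank_pos
  omega

theorem conj_mem_of_finrank_eq_two {F : IntermediateField ℚ ℂ} (hF : Module.finrank ℚ F = 2)
    {z : ℂ} (hz : z ∈ F) : conj z ∈ F := by
  -- `F.algebra'`, not the `DivisionRing.toRatAlgebra` that instance search finds, is the
  -- ℚ-algebra structure `fieldRange_of_normal` expects.
  have := @Algebra.IsQuadraticExtension.normal ℚ F _ _ F.algebra' ⟨hF⟩
  rw [← ((Complex.conjAe.toAlgHom.restrictScalars ℚ).comp F.val).fieldRange_of_normal]
  exact ⟨⟨z, hz⟩, rfl⟩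

theorem exists_rat_of_conj_eq {F : IntermediateField ℚ ℂ} (hF : Module.finrank ℚ F = 2)
    (him : ∃ z : F, (z : ℂ).im ≠ 0) {z : ℂ} (hz : z ∈ F) (hconj : conj z = z) :
    ∃ q : ℚ, z = q := by
  set ℝ' : IntermediateField ℚ ℂ := (Complex.ofRealAm.restrictScalars ℚ).fieldRange
  have hbot : F ⊓ ℝ' = ⊥ := by
    refine inf_eq_bot_of_finrank_eq_two hF fun hle => ?_
    obtain ⟨w, hw⟩ := him
    obtain ⟨r, hr⟩ := hle w.2
    exact hw (by simp [← hr])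
  have : z ∈ F ⊓ ℝ' := ⟨hz, (Complex.conj_eq_iff_re.1 hconj).symm ▸ ⟨z.re, rfl⟩⟩
  rw [hbot, mem_bot] at this
  obtain ⟨q, rfl⟩ := this
  exact ⟨q, by simp⟩

abbrev starRingOfStarMem {K L : Type*} [Field K] [Field L] [StarRing L] [Algebra K L]
    (F : IntermediateField K L) (h : ∀ z ∈ F, star z ∈ F) : StarRing F where
  star z := ⟨star z, h z z.2⟩
  star_involutive z := Subtype.ext (star_star (z : L))
  star_mul a b := Subtype.ext (star_mul (a : L) b)
  star_add a b := Subtype.ext (star_add (a : L) b)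

end IntermediateField

def jBeta {R : Type*} [Zero R] [One R] (b : R) : Matrix (Fin 3) (Fin 3) R :=
  !![0, 0, 1; 0, b, 0; 1, 0, 0]

theorem jBeta_mulVec {R : Type*} [Semiring R] (b : R) (x : Fin 3 → R) :
    jBeta b *ᵥ x = ![x 2, b * x 1, x 0] := by
  ext i; fin_cases i <;> simp [jBeta, mulVec, dotProduct, Fin.sum_univ_three]

theorem map_jBeta {R S : Type*} [Semiring R] [Semiring S] (f : R →+* S) (b : R) :
    (jBeta b).map f = jBeta (f b) := by
  ext i j; fin_cases i <;> fin_cases j <;> simp [jBeta]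

namespace Matrix

theorem star_dotProduct_conjTranspose_mul_mul_mulVec {R m n : Type*} [CommSemiring R]
    [StarRing R] [Fintype m] [Fintype n] (A : Matrix m n R) (B : Matrix m m R) (x : n → R) :
    star x ⬝ᵥ (Aᴴ * B * A) *ᵥ x = star (A *ᵥ x) ⬝ᵥ B *ᵥ A *ᵥ x := by
  rw [← mulVec_mulVec, ← mulVec_mulVec, dotProduct_mulVec, ← star_mulVec]

theorem conjTranspose_nonsing_inv_mul_mul_eq {R n : Type*} [CommRing R] [StarRing R]
    [Fintype n] [DecidableEq n] {S J G : Matrix n n R} (hS : IsUnit S.det) (h : Sᴴ * J * S = G) :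
    S⁻¹ᴴ * G * S⁻¹ = J := by
  have hSH : IsUnit Sᴴ.det := by rw [det_conjTranspose]; exact hS.star
  rw [← h, conjTranspose_nonsing_inv, Matrix.mul_assoc, Matrix.mul_assoc, mul_nonsing_inv _ hS,
    Matrix.mul_one, ← Matrix.mul_assoc, nonsing_inv_mul _ hSH, Matrix.one_mul]

theorem IsHermitian.star_dotProduct_mulVec {R n : Type*} [CommSemiring R] [StarRing R]
    [Fintype n] {J : Matrix n n R} (hJ : J.IsHermitian) (x y : n → R) :
    star (star x ⬝ᵥ J *ᵥ y) = star y ⬝ᵥ J *ᵥ x := by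
  rw [star_dotProduct, star_star, star_mulVec, ← dotProduct_mulVec, hJ.eq]

theorem conjTranspose_mul_mul_apply {R m n : Type*} [CommSemiring R] [StarRing R] [Fintype m]
    [Fintype n] (A : Matrix m n R) (J : Matrix m m R) (i j : n) :
    (Aᴴ * J * A) i j = star (Aᵀ i) ⬝ᵥ J *ᵥ Aᵀ j := by
  rw [Matrix.mul_assoc, mul_apply, dotProduct]
  simp [mulVec, dotProduct, mul_apply]

variable {K : Type*} [Field K] [StarRing K]

theorem exists_star_dotProduct_mulVec_eq_one {n : Type*} [Fintype n] [DecidableEq n]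
    {J : Matrix n n K} (hJ : IsUnit J.det) {v : n → K} (hv : v ≠ 0) :
    ∃ w, star v ⬝ᵥ J *ᵥ w = 1 := by
  have hr : star v ᵥ* J ≠ 0 := by
    rw [Ne, ← zero_vecMul J,
      (vecMul_injective_iff_isUnit.2 ((isUnit_iff_isUnit_det J).2 hJ)).eq_iff, star_eq_zero]
    exact hv
  obtain ⟨j, hj⟩ := Function.ne_iff.1 hr
  exact ⟨Pi.single j ((star v ᵥ* J) j)⁻¹, by
    rw [dotProduct_mulVec, dotProduct_single, mul_inv_cancel₀ hj]⟩

theorem IsHermitian.exists_isotropic_partner [NeZero (2 : K)] {n : Type*} [Fintype n]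
    [DecidableEq n] {J : Matrix n n K} (hJ : J.IsHermitian) (hdet : IsUnit J.det) {v : n → K}
    (hv : v ≠ 0) (hiso : star v ⬝ᵥ J *ᵥ v = 0) :
    ∃ w, star v ⬝ᵥ J *ᵥ w = 1 ∧ star w ⬝ᵥ J *ᵥ w = 0 := by
  obtain ⟨w, hvw⟩ := exists_star_dotProduct_mulVec_eq_one hdet hv
  have hwv : star w ⬝ᵥ J *ᵥ v = 1 := by rw [← hJ.star_dotProduct_mulVec, hvw, star_one]
  set c := (star w ⬝ᵥ J *ᵥ w) / 2
  have hc : star c = c := by simp [c, hJ.star_dotProduct_mulVec]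
  refine ⟨w - c • v, ?_, ?_⟩
  · simp [mulVec_sub, mulVec_smul, hvw, hiso]
  · simp only [star_sub, star_smul, hc, mulVec_sub, mulVec_smul, dotProduct_sub, sub_dotProduct,
      smul_dotProduct, dotProduct_smul, smul_eq_mul, hvw, hwv, hiso, mul_one, mul_zero, sub_zero]
    rw [sub_sub, add_halves, sub_self]

theorem isUnit_det_of_conjTranspose_mul_mul_eq_jBeta {S J : Matrix (Fin 3) (Fin 3) K} {b : K}
    (h : Sᴴ * J * S = jBeta b) (hS : Sᵀ 1 ≠ 0) : IsUnit S.det := by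
  rw [isUnit_iff_ne_zero, Ne, ← exists_mulVec_eq_zero_iff]
  rintro ⟨x, hx, hSx⟩
  have hJx := congrArg ((Sᴴ * J) *ᵥ ·) hSx
  simp only [mulVec_mulVec, h, jBeta_mulVec, mulVec_zero] at hJx
  have hx2 : x 2 = 0 := congrFun hJx 0
  have hx0 : x 0 = 0 := congrFun hJx 2
  have hx1 : x 1 = 0 := by
    rw [← transpose_transpose S, mulVec_transpose, vecMul_eq_sum, Fin.sum_univ_three, hx0, hx2,
      zero_smul, zero_smul, zero_add, add_zero, smul_eq_zero] at hSx
    exact hSx.resolve_right hS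
  exact hx (by ext i; fin_cases i <;> assumption)

theorem IsHermitian.exists_conjTranspose_mul_mul_eq_jBeta {J : Matrix (Fin 3) (Fin 3) K}
    (hJ : J.IsHermitian) {v w : Fin 3 → K} (hvv : star v ⬝ᵥ J *ᵥ v = 0)
    (hvw : star v ⬝ᵥ J *ᵥ w = 1) (hww : star w ⬝ᵥ J *ᵥ w = 0) :
    ∃ (b : K) (S : Matrix (Fin 3) (Fin 3) K), IsSelfAdjoint b ∧ IsUnit S.det ∧
      Sᴴ * J * S = jBeta b ∧ S *ᵥ Pi.single 0 1 = v := by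
  have hwv : star w ⬝ᵥ J *ᵥ v = 1 := by rw [← hJ.star_dotProduct_mulVec, hvw, star_one]
  set u := (star v ᵥ* J) ⨯₃ (star w ᵥ* J)
  have hvu : star v ⬝ᵥ J *ᵥ u = 0 := by rw [dotProduct_mulVec]; exact dot_self_cross _ _
  have hwu : star w ⬝ᵥ J *ᵥ u = 0 := by rw [dotProduct_mulVec]; exact dot_cross_self _ _
  have huv : star u ⬝ᵥ J *ᵥ v = 0 := by rw [← hJ.star_dotProduct_mulVec, hvu, star_zero]
  have huw : star u ⬝ᵥ J *ᵥ w = 0 := by rw [← hJ.star_dotProduct_mulVec, hwu, star_zero]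
  have hu : u ≠ 0 := by
    refine crossProduct_ne_zero_iff_linearIndependent.2
      (LinearIndependent.pair_iff.2 fun s t hst => ?_)
    have h1 := congrArg (· ⬝ᵥ v) hst
    have h2 := congrArg (· ⬝ᵥ w) hst
    simp only [add_dotProduct, smul_dotProduct, ← dotProduct_mulVec, hvv, hwv, hvw, hww,
      zero_dotProduct, smul_eq_mul, mul_zero, mul_one, zero_add, add_zero] at h1 h2
    exact ⟨h2, h1⟩
  set S : Matrix (Fin 3) (Fin 3) K := (of ![v, u, w])ᵀ
  have hcol : ∀ i, Sᵀ i = ![v, u, w] i := fun _ => rfl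
  have hgram : Sᴴ * J * S = jBeta (star u ⬝ᵥ J *ᵥ u) := by
    ext i j
    rw [conjTranspose_mul_mul_apply, hcol, hcol]
    fin_cases i <;> fin_cases j <;> simp [jBeta, hvv, hvw, hvu, hwv, hwu, hww, huv, huw]
  exact ⟨_, S, hJ.star_dotProduct_mulVec u u, isUnit_det_of_conjTranspose_mul_mul_eq_jBeta hgram hu,
    hgram, by rw [mulVec_single_one]; rfl⟩

end Matrix

theorem exists_ne_zero_mul_add_mul_eq_zero {K : Type*} [Field K] (c d : K) :
    ∃ a b : K, (a ≠ 0 ∨ b ≠ 0) ∧ c * a + d * b = 0 := by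
  by_cases hd : d = 0
  · exact ⟨0, 1, Or.inr one_ne_zero, by simp [hd]⟩
  · exact ⟨d, -c, Or.inl hd, by ring⟩

theorem pos_of_conjTranspose_mul_diagonal_mul_eq_jBeta {Q : Matrix (Fin 3) (Fin 3) ℂ}
    (hQ : IsUnit Q.det) {β : ℝ} (h : Qᴴ * diagonal ![1, 1, -1] * Q = jBeta (β : ℂ)) : 0 < β := by
  by_contra! hβ
  obtain ⟨a, b, hab, hy2⟩ := exists_ne_zero_mul_add_mul_eq_zero (Q 2 0 - Q 2 2) (Q 2 1)
  set x : Fin 3 → ℂ := ![a, b, -a]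
  have hform := star_dotProduct_conjTranspose_mul_mul_mulVec Q (diagonal ![1, 1, -1]) x
  rw [h, jBeta_mulVec] at hform
  generalize hy : Q *ᵥ x = y at hform
  replace hy2 : y 2 = 0 := by
    rw [← hy2, ← hy]
    simp only [x, mulVec, dotProduct, Fin.sum_univ_three, cons_val_zero, cons_val_one, cons_val]
    ring
  simp only [dotProduct, Fin.sum_univ_three, mulVec_diagonal, hy2, x, Pi.star_apply,
    RCLike.star_def, cons_val, cons_val_one, cons_val_zero, mul_neg, map_neg, neg_mul, one_mul,
    map_zero, mul_zero, add_zero] at hform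
  have hreal : -2 * normSq a + β * normSq b = normSq (y 0) + normSq (y 1) := by
    have : ((-2 * normSq a + β * normSq b : ℝ) : ℂ) = (normSq (y 0) + normSq (y 1) : ℝ) := by
      push_cast [normSq_eq_conj_mul_self]
      linear_combination hform
    exact_mod_cast this
  have hβb := mul_nonpos_of_nonpos_of_nonneg hβ (normSq_nonneg b)
  have := normSq_nonneg a
  have := normSq_nonneg (y 0)
  have := normSq_nonneg (y 1)
  have ha : a = 0 := normSq_eq_zero.1 (by linarith)
  have hy0 : y 0 = 0 := normSq_eq_zero.1 (by linarith)
  have hy1 : y 1 = 0 := normSq_eq_zero.1 (by linarith)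
  have hx : x ≠ 0 := fun hx => hab.elim (· ha) (· (congrFun hx 1))
  refine hQ.ne_zero (exists_mulVec_eq_zero_iff.1 ⟨x, hx, hy.trans ?_⟩)
  ext i
  fin_cases i <;> assumption

theorem pos_of_congr_diagonal_of_congr_jBeta {J P S : Matrix (Fin 3) (Fin 3) ℂ} {β : ℝ}
    (hP : IsUnit P.det) (hPJ : Pᴴ * J * P = diagonal ![1, 1, -1])
    (hS : IsUnit S.det) (hSJ : Sᴴ * J * S = jBeta (β : ℂ)) : 0 < β := by
  refine pos_of_conjTranspose_mul_diagonal_mul_eq_jBeta (Q := P⁻¹ * S) ?_ ?_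
  · rw [det_mul]; exact (isUnit_nonsing_inv_det P hP).mul hS
  · rw [← hSJ, ← conjTranspose_nonsing_inv_mul_mul_eq hP hPJ, conjTranspose_mul]
    simp only [Matrix.mul_assoc]

/-- For an imaginary quadratic field `F ⊆ ℂ`, a hermitian `J ∈ GL₃(F)` of
signature `(2,1)` and a nonzero isotropic vector `v̄ ∈ F³` for `J`, there exist
`β ∈ ℚ_{>0}` and `T ∈ GL₃(F)` with `Tᴴ ⬝ J_β ⬝ T = J` and `T ⬝ v̄ = e₁`. -/
theorem hecke_stmt3 (F : IntermediateField ℚ ℂ)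
    (hdeg : Module.finrank ℚ F = 2)
    (him : ∃ z : F, (z : ℂ).im ≠ 0)
    (J : Matrix (Fin 3) (Fin 3) F) (hJinv : IsUnit J.det)
    (hherm : (J.map ((↑) : F → ℂ))ᴴ = J.map ((↑) : F → ℂ))
    (hsig : ∃ P : Matrix (Fin 3) (Fin 3) ℂ, IsUnit P.det ∧
      Pᴴ * J.map ((↑) : F → ℂ) * P = Matrix.diagonal ![1, 1, -1])
    (v : Fin 3 → F) (hv : v ≠ 0)
    (hiso : star (fun i => ((v i : ℂ))) ⬝ᵥ ((J.map ((↑) : F → ℂ)) *ᵥ fun i => ((v i : ℂ))) = 0) :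
    ∃ (β : ℚ) (T : Matrix (Fin 3) (Fin 3) F), 0 < β ∧ IsUnit T.det ∧
      (T.map ((↑) : F → ℂ))ᴴ * !![0, 0, 1; 0, (β : ℂ), 0; 1, 0, 0] * T.map ((↑) : F → ℂ) =
        J.map ((↑) : F → ℂ) ∧
      T *ᵥ v = Pi.single (0 : Fin 3) (1 : F) := by
  let _ : StarRing F := F.starRingOfStarMem fun z hz => F.conj_mem_of_finrank_eq_two hdeg hz
  set ι : F →+* ℂ := algebraMap F ℂ
  have hι : ∀ M : Matrix (Fin 3) (Fin 3) F, (M.map ι)ᴴ = Mᴴ.map ι :=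
    fun M => (conjTranspose_map ι fun _ => rfl).symm
  have hJ : J.IsHermitian := map_injective Subtype.val_injective ((hι J).symm.trans hherm)
  have hvv : star v ⬝ᵥ J *ᵥ v = 0 := by
    apply Subtype.val_injective
    rw [ZeroMemClass.coe_zero, ← hiso]
    exact (RingHom.map_dotProduct ι _ _).trans (congrArg _ (funext (RingHom.map_mulVec ι J v)))
  obtain ⟨w, hvw, hww⟩ := hJ.exists_isotropic_partner hJinv hv hvv
  obtain ⟨b, S, hb, hS, hgram, hSv⟩ := hJ.exists_conjTranspose_mul_mul_eq_jBeta hvv hvw hww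
  obtain ⟨β, hβ⟩ := F.exists_rat_of_conj_eq hdeg him b.2 (congrArg Subtype.val hb)
  have hmap : ∀ {T M G : Matrix (Fin 3) (Fin 3) F}, Tᴴ * M * T = G →
      (T.map ι)ᴴ * M.map ι * T.map ι = G.map ι := by
    intro T M G h
    rw [hι, ← Matrix.map_mul, ← Matrix.map_mul, h]
  have hjβ : (jBeta b).map ι = jBeta (β : ℂ) := by rw [map_jBeta]; exact congrArg jBeta hβ
  refine ⟨β, S⁻¹, ?_, isUnit_nonsing_inv_det S hS, ?_, ?_⟩
  · obtain ⟨P, hP, hPJ⟩ := hsig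
    have hSℂ : IsUnit (ι.mapMatrix S).det := RingHom.map_det ι S ▸ hS.map ι
    have := pos_of_congr_diagonal_of_congr_jBeta (β := β) hP hPJ hSℂ
      ((hmap hgram).trans (by rw [hjβ, ofReal_ratCast]))
    exact_mod_cast this
  · change _ * jBeta (β : ℂ) * _ = _
    rw [← hjβ]
    exact hmap (conjTranspose_nonsing_inv_mul_mul_eq hS hgram)
  · rw [← hSv, mulVec_mulVec, nonsing_inv_mul _ hS, one_mulVec]
end

section
/- Let F ⊆ ℂ be an imaginary quadratic field and let J ∈ GL₃(F) be hermitian of signature (2,1). Then the special unitary group {g ∈ SL₃(F) : gᴴ J g = J} acts transitively on the set of isotropic lines: for any two nonzero isotropic vectors v, w ∈ F³ for J, there exist g ∈ SL₃(F) with gᴴ J g = J and a scalar c ∈ Fˣ such that g · v = c • w. -/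
/-!
Over any field with involution in which `2 ≠ 0`, a nonzero isotropic vector `v` of a
nondegenerate hermitian form `J` on `K³` extends to a basis `v, u, z` whose Gram matrix is
`!![0, 1, 0; 1, 0, 0; 0, 0, d]`: `u` is an isotropic partner with `⟨v, u⟩ = 1` and `z` spans the
orthogonal complement of the hyperbolic plane spanned by `v` and `u`. Rescaling `z` makes the
basis unimodular, and comparing determinants then forces `d = -det J`. Hence the frames of any
two nonzero isotropic vectors have the same Gram matrix, and `B_w * B_v⁻¹` lies in `SU(J)` and
maps `v` to `w`. Over an imaginary quadratic `F ⊆ ℂ` the involution is complex conjugation,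
which preserves `F` since quadratic extensions are normal.
-/

open Matrix

theorem Matrix.exists_ne_zero_dotProduct_eq_zero {K : Type*} [Field K] (a b : Fin 3 → K) :
    ∃ z ≠ 0, a ⬝ᵥ z = 0 ∧ b ⬝ᵥ z = 0 := by
  obtain ⟨z, hz, hMz⟩ := exists_mulVec_eq_zero_iff.2
    (det_eq_zero_of_row_eq_zero (A := of ![a, b, 0]) 2 fun _ => rfl)
  exact ⟨z, hz, congrFun hMz 0, congrFun hMz 1⟩

section Sesquilinear

variable {R n : Type*} [CommSemiring R] [StarRing R] [Fintype n] {J : Matrix n n R}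

theorem Matrix.IsHermitian.star_dotProduct_mulVec_comm (hJ : J.IsHermitian) (p q : n → R) :
    star p ⬝ᵥ (J *ᵥ q) = star (star q ⬝ᵥ (J *ᵥ p)) := by
  rw [star_dotProduct q (J *ᵥ p), star_star, star_mulVec, hJ.eq, ← dotProduct_mulVec]

theorem Matrix.conjTranspose_mul_mul_apply_s4 (B : Matrix n n R) (k l : n) :
    (Bᴴ * J * B) k l = star (Bᵀ k) ⬝ᵥ (J *ᵥ Bᵀ l) := by
  rw [dotProduct_mulVec]
  simp only [mul_apply, vecMul, dotProduct, conjTranspose_apply, transpose_apply,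
    Pi.star_apply, Finset.sum_mul]

end Sesquilinear

namespace Matrix.IsHermitian

variable {K : Type*} [Field K] [StarRing K] {J : Matrix (Fin 3) (Fin 3) K}

theorem exists_isotropic_star_dotProduct_mulVec_eq_one [NeZero (2 : K)] (hJ : J.IsHermitian)
    (hdet : J.det ≠ 0) {v : Fin 3 → K} (hv : v ≠ 0) (hvv : star v ⬝ᵥ (J *ᵥ v) = 0) :
    ∃ u, star u ⬝ᵥ (J *ᵥ u) = 0 ∧ star v ⬝ᵥ (J *ᵥ u) = 1 := by
  obtain ⟨j, hj⟩ : ∃ j, (star v ᵥ* J) j ≠ 0 := by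
    by_contra! h
    exact hdet (exists_vecMul_eq_zero_iff.1 ⟨star v, star_ne_zero.2 hv, funext h⟩)
  set x : Fin 3 → K := Pi.single j ((star v ᵥ* J) j)⁻¹
  have hvx : star v ⬝ᵥ (J *ᵥ x) = 1 := by
    rw [dotProduct_mulVec, dotProduct_single, mul_inv_cancel₀ hj]
  have hxv : star x ⬝ᵥ (J *ᵥ v) = 1 := by
    rw [hJ.star_dotProduct_mulVec_comm, hvx, star_one]
  set μ := star x ⬝ᵥ (J *ᵥ x)
  have hμ : star (μ / 2) = μ / 2 := by
    rw [star_div₀, star_ofNat, ← hJ.star_dotProduct_mulVec_comm]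
  refine ⟨x - (μ / 2) • v, ?_, ?_⟩
  · simp only [star_sub, star_smul, hμ, mulVec_sub, mulVec_smul, sub_dotProduct, dotProduct_sub,
      smul_dotProduct, dotProduct_smul, hvx, hxv, hvv, smul_eq_mul]
    field_simp
    ring
  · simp only [mulVec_sub, mulVec_smul, dotProduct_sub, dotProduct_smul, hvx, hvv, smul_eq_mul]
    ring

theorem exists_hyperbolic_frame_of_isotropic [NeZero (2 : K)] (hJ : J.IsHermitian)
    (hdet : J.det ≠ 0) {v : Fin 3 → K} (hv : v ≠ 0) (hvv : star v ⬝ᵥ (J *ᵥ v) = 0) :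
    ∃ B : Matrix (Fin 3) (Fin 3) K, B.det ≠ 0 ∧ B *ᵥ Pi.single 0 1 = v ∧
      ∃ d, Bᴴ * J * B = !![0, 1, 0; 1, 0, 0; 0, 0, d] := by
  obtain ⟨u, huu, hvu⟩ := hJ.exists_isotropic_star_dotProduct_mulVec_eq_one hdet hv hvv
  obtain ⟨z, hz, hvz, huz⟩ := exists_ne_zero_dotProduct_eq_zero (star v ᵥ* J) (star u ᵥ* J)
  rw [← dotProduct_mulVec] at hvz huz
  have huv : star u ⬝ᵥ (J *ᵥ v) = 1 := by rw [hJ.star_dotProduct_mulVec_comm, hvu, star_one]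
  have hzv : star z ⬝ᵥ (J *ᵥ v) = 0 := by rw [hJ.star_dotProduct_mulVec_comm, hvz, star_zero]
  have hzu : star z ⬝ᵥ (J *ᵥ u) = 0 := by rw [hJ.star_dotProduct_mulVec_comm, huz, star_zero]
  set B : Matrix (Fin 3) (Fin 3) K := (of ![v, u, z])ᵀ
  have hB : ∀ c : Fin 3 → K, B *ᵥ c = c 0 • v + c 1 • u + c 2 • z := fun c => by
    rw [← vecMul_transpose, transpose_transpose, vecMul_eq_sum, Fin.sum_univ_three]
    rfl
  refine ⟨B, fun h0 => ?_, by rw [hB]; simp, star z ⬝ᵥ (J *ᵥ z), ?_⟩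
  · obtain ⟨c, hc, hBc⟩ := exists_mulVec_eq_zero_iff.2 h0
    rw [hB] at hBc
    have hc1 : c 1 = 0 := by
      simpa [mulVec_add, mulVec_smul, hvv, hvu, hvz] using
        congrArg (fun p => star v ⬝ᵥ (J *ᵥ p)) hBc
    have hc0 : c 0 = 0 := by
      simpa [mulVec_add, mulVec_smul, huv, huu, huz, hc1] using
        congrArg (fun p => star u ⬝ᵥ (J *ᵥ p)) hBc
    have hc2 : c 2 = 0 := by simpa [hc0, hc1, hz] using hBc
    exact hc (funext fun i => by fin_cases i <;> assumption)
  · ext k l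
    rw [conjTranspose_mul_mul_apply_s4]
    change star (![v, u, z] k) ⬝ᵥ (J *ᵥ ![v, u, z] l) = _
    fin_cases k <;> fin_cases l <;> simp [hvv, hvu, hvz, huv, huu, huz, hzv, hzu]

theorem exists_unimodular_hyperbolic_frame_of_isotropic [NeZero (2 : K)] (hJ : J.IsHermitian)
    (hdet : J.det ≠ 0) {v : Fin 3 → K} (hv : v ≠ 0) (hvv : star v ⬝ᵥ (J *ᵥ v) = 0) :
    ∃ B : Matrix (Fin 3) (Fin 3) K, B.det = 1 ∧ B *ᵥ Pi.single 0 1 = v ∧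
      Bᴴ * J * B = !![0, 1, 0; 1, 0, 0; 0, 0, -J.det] := by
  obtain ⟨B, hB, hBv, d, hBJ⟩ := hJ.exists_hyperbolic_frame_of_isotropic hdet hv hvv
  set s := B.det⁻¹
  set D : Matrix (Fin 3) (Fin 3) K := diagonal ![1, 1, s]
  have hdet1 : (B * D).det = 1 := by
    simp [D, s, det_diagonal, Fin.prod_univ_three, hB]
  have hgram : (B * D)ᴴ * J * (B * D) = !![0, 1, 0; 1, 0, 0; 0, 0, star s * d * s] := by
    rw [conjTranspose_mul, show Dᴴ * Bᴴ * J * (B * D) = Dᴴ * (Bᴴ * J * B) * D by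
      simp only [Matrix.mul_assoc], hBJ]
    ext i j
    fin_cases i <;> fin_cases j <;> simp [D]
  have hd : star s * d * s = -J.det := by
    have hH : (!![0, 1, 0; 1, 0, 0; 0, 0, star s * d * s] : Matrix (Fin 3) (Fin 3) K).det =
        -(star s * d * s) := by
      simp [det_fin_three]
    have h := congrArg det hgram
    rw [det_mul, det_mul, det_conjTranspose, hdet1, star_one, one_mul, mul_one, hH] at h
    rw [h, neg_neg]
  refine ⟨B * D, hdet1, ?_, hd ▸ hgram⟩
  rw [← mulVec_mulVec, diagonal_mulVec_single]
  simpa using hBv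

theorem exists_det_eq_one_isometry_mulVec_eq [NeZero (2 : K)] (hJ : J.IsHermitian)
    (hdet : J.det ≠ 0) {v w : Fin 3 → K} (hv : v ≠ 0) (hw : w ≠ 0)
    (hvv : star v ⬝ᵥ (J *ᵥ v) = 0) (hww : star w ⬝ᵥ (J *ᵥ w) = 0) :
    ∃ g : Matrix (Fin 3) (Fin 3) K, g.det = 1 ∧ gᴴ * J * g = J ∧ g *ᵥ v = w := by
  obtain ⟨A, hA, hAv, hAJ⟩ := hJ.exists_unimodular_hyperbolic_frame_of_isotropic hdet hv hvv
  obtain ⟨B, hB, hBw, hBJ⟩ := hJ.exists_unimodular_hyperbolic_frame_of_isotropic hdet hw hww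
  have hAu : IsUnit A.det := hA ▸ isUnit_one
  refine ⟨B * A⁻¹, by rw [det_mul, det_nonsing_inv, hA, hB, Ring.inverse_one, one_mul],
    ?_, ?_⟩
  · calc (B * A⁻¹)ᴴ * J * (B * A⁻¹) = (A⁻¹)ᴴ * (Bᴴ * J * B) * A⁻¹ := by
          simp only [conjTranspose_mul, Matrix.mul_assoc]
      _ = (A⁻¹)ᴴ * (Aᴴ * J * A) * A⁻¹ := by rw [hAJ, hBJ]
      _ = J := by
          rw [conjTranspose_nonsing_inv]
          simp only [Matrix.mul_assoc]
          rw [mul_nonsing_inv _ hAu, Matrix.mul_one,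
            nonsing_inv_mul_cancel_left _ _ (by simp [hA])]
  · rw [← hAv, mulVec_mulVec, nonsing_inv_mul_cancel_right _ _ hAu, hBw]

end Matrix.IsHermitian

abbrev IntermediateField.starRingOfConjMem (F : IntermediateField ℚ ℂ)
    (hF : ∀ x ∈ F, starRingEnd ℂ x ∈ F) : StarRing F where
  star x := ⟨starRingEnd ℂ x, hF x x.2⟩
  star_involutive x := Subtype.ext (Complex.conj_conj (x : ℂ))
  star_mul x y := Subtype.ext ((map_mul (starRingEnd ℂ) (x : ℂ) y).trans (mul_comm _ _))
  star_add x y := Subtype.ext (map_add (starRingEnd ℂ) (x : ℂ) y)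

theorem IntermediateField.conj_mem_of_finrank_eq_two_s4 {F : IntermediateField ℚ ℂ}
    (hF : Module.finrank ℚ F = 2) {x : ℂ} (hx : x ∈ F) : starRingEnd ℂ x ∈ F := by
  have : Algebra.IsQuadraticExtension ℚ F := ⟨hF⟩
  have hnormal : Normal ℚ F := Algebra.IsQuadraticExtension.normal ℚ F
  let σ : ℂ →ₐ[ℚ] ℂ := Complex.conjAe.restrictScalars ℚ
  rw [← @AlgHom.fieldRange_of_normal ℚ ℂ _ _ _ F hnormal (σ.comp F.val)]
  exact ⟨⟨x, hx⟩, rfl⟩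

section StarRingHom

variable {R S n : Type*} [CommSemiring R] [StarRing R] [CommSemiring S] [StarRing S] [Fintype n]
  (f : R →+* S) (hf : ∀ x, f (star x) = star (f x))
include hf

theorem Matrix.conjTranspose_map_mul_map_mul_map (A B C : Matrix n n R) :
    (A.map f)ᴴ * B.map f * C.map f = (Aᴴ * B * C).map f := by
  rw [← conjTranspose_map f hf, Matrix.map_mul, Matrix.map_mul]

theorem Matrix.star_comp_dotProduct_mulVec_comp (J : Matrix n n R) (v w : n → R) :
    star (f ∘ v) ⬝ᵥ (J.map f *ᵥ (f ∘ w)) = f (star v ⬝ᵥ (J *ᵥ w)) := by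
  rw [RingHom.map_dotProduct]
  congr 1 <;> ext i
  · exact (hf (v i)).symm
  · exact (RingHom.map_mulVec f J w i).symm

end StarRingHom

theorem hecke_stmt4_general (F : IntermediateField ℚ ℂ)
    (hdeg : Module.finrank ℚ F = 2)
    (J : Matrix (Fin 3) (Fin 3) F) (hJinv : IsUnit J.det)
    (hherm : (J.map ((↑) : F → ℂ))ᴴ = J.map ((↑) : F → ℂ))
    (v w : Fin 3 → F) (hv : v ≠ 0) (hw : w ≠ 0)
    (hisov : star (fun i => ((v i : ℂ))) ⬝ᵥ ((J.map ((↑) : F → ℂ)) *ᵥ fun i => ((v i : ℂ))) = 0)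
    (hisow : star (fun i => ((w i : ℂ))) ⬝ᵥ ((J.map ((↑) : F → ℂ)) *ᵥ fun i => ((w i : ℂ))) = 0) :
    ∃ g : Matrix (Fin 3) (Fin 3) F, g.det = 1 ∧
      (g.map ((↑) : F → ℂ))ᴴ * J.map ((↑) : F → ℂ) * g.map ((↑) : F → ℂ) =
        J.map ((↑) : F → ℂ) ∧
      ∃ c : F, c ≠ 0 ∧ g *ᵥ v = c • w := by
  let _ : StarRing F := F.starRingOfConjMem fun _ => F.conj_mem_of_finrank_eq_two_s4 hdeg
  let φ : F →+* ℂ := algebraMap F ℂ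
  have hφ : ∀ x : F, φ (star x) = star (φ x) := fun _ => rfl
  have hJ : J.IsHermitian := map_injective φ.injective <| (conjTranspose_map φ hφ).trans hherm
  have isotropic {u : Fin 3 → F} (hu : star (φ ∘ u) ⬝ᵥ (J.map φ *ᵥ (φ ∘ u)) = 0) :
      star u ⬝ᵥ (J *ᵥ u) = 0 :=
    φ.injective <| by rw [← star_comp_dotProduct_mulVec_comp φ hφ, hu, map_zero]
  obtain ⟨g, hg, hgJ, hgv⟩ := hJ.exists_det_eq_one_isometry_mulVec_eq hJinv.ne_zero hv hw
    (isotropic hisov) (isotropic hisow)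
  refine ⟨g, hg, ?_, 1, one_ne_zero, by rw [one_smul, hgv]⟩
  exact (conjTranspose_map_mul_map_mul_map φ hφ g J g).trans (by rw [hgJ]; rfl)

/-- For an imaginary quadratic field `F ⊆ ℂ` and a hermitian `J ∈ GL₃(F)` of
signature `(2,1)`, the special unitary group `{g ∈ SL₃(F) : gᴴ J g = J}` acts transitively
on isotropic lines: any two nonzero isotropic vectors `v, w ∈ F³` satisfy `g ⬝ v = c • w`
for some such `g` and some `c ∈ Fˣ`. -/
theorem hecke_stmt4 (F : IntermediateField ℚ ℂ)
    (hdeg : Module.finrank ℚ F = 2)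
    (him : ∃ z : F, (z : ℂ).im ≠ 0)
    (J : Matrix (Fin 3) (Fin 3) F) (hJinv : IsUnit J.det)
    (hherm : (J.map ((↑) : F → ℂ))ᴴ = J.map ((↑) : F → ℂ))
    (hsig : ∃ P : Matrix (Fin 3) (Fin 3) ℂ, IsUnit P.det ∧
      Pᴴ * J.map ((↑) : F → ℂ) * P = Matrix.diagonal ![1, 1, -1])
    (v w : Fin 3 → F) (hv : v ≠ 0) (hw : w ≠ 0)
    (hisov : star (fun i => ((v i : ℂ))) ⬝ᵥ ((J.map ((↑) : F → ℂ)) *ᵥ fun i => ((v i : ℂ))) = 0)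
    (hisow : star (fun i => ((w i : ℂ))) ⬝ᵥ ((J.map ((↑) : F → ℂ)) *ᵥ fun i => ((w i : ℂ))) = 0) :
    ∃ g : Matrix (Fin 3) (Fin 3) F, g.det = 1 ∧
      (g.map ((↑) : F → ℂ))ᴴ * J.map ((↑) : F → ℂ) * g.map ((↑) : F → ℂ) =
        J.map ((↑) : F → ℂ) ∧
      ∃ c : F, c ≠ 0 ∧ g *ᵥ v = c • w :=
  hecke_stmt4_general F hdeg J hJinv hherm v w hv hw hisov hisow
end

section
/- Let g ∈ SU(2,1) have block decomposition g = [[A, B], [C, D]] with A ∈ M₂(ℂ), B a 2×1 column, C a 1×2 row, and D ∈ ℂ, and let U ∈ 𝒟_{2,1} (i.e., U is a column vector in ℂ² with UᴴU < 1). Then the scalar C·U + D is nonzero, and the column vector (A·U + B)·(C·U + D)⁻¹ again lies in 𝒟_{2,1}. In other words, the generalized fractional transformation g·U := (A·U + B)(C·U + D)⁻¹ is a well-defined self-map of the ball 𝒟_{2,1}. -/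
open Matrix

noncomputable section

/-- `J₀ = diag(1, 1, −1)`. -/
def J0 : Matrix (Fin 3) (Fin 3) ℂ := Matrix.diagonal ![1, 1, -1]

/-- `SU(2,1) = {g ∈ M₃(ℂ) : gᴴ J₀ g = J₀, det g = 1}`. -/
def SU21 : Set (Matrix (Fin 3) (Fin 3) ℂ) := {g | gᴴ * J0 * g = J0 ∧ g.det = 1}

/-- The upper-left `2×2` block `A` of `g`. -/
def blockA (g : Matrix (Fin 3) (Fin 3) ℂ) : Matrix (Fin 2) (Fin 2) ℂ :=
  Matrix.of fun i j => g i.castSucc j.castSucc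

/-- The upper-right `2×1` block `B` of `g`. -/
def blockB (g : Matrix (Fin 3) (Fin 3) ℂ) : Matrix (Fin 2) (Fin 1) ℂ :=
  Matrix.of fun i _ => g i.castSucc 2

/-- The lower-left `1×2` block `C` of `g`. -/
def blockC (g : Matrix (Fin 3) (Fin 3) ℂ) : Matrix (Fin 1) (Fin 2) ℂ :=
  Matrix.of fun _ j => g 2 j.castSucc

/-- The `(3,3)` entry `D` of `g`. -/
def blockD (g : Matrix (Fin 3) (Fin 3) ℂ) : ℂ := g 2 2

/-- Membership in the ball `𝒟_{2,1} = {U ∈ M_{2,1}(ℂ) : ŪᵀU − 1 < 0}`. -/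
def inBall (U : Matrix (Fin 2) (Fin 1) ℂ) : Prop := ((Uᴴ * U) 0 0).re < 1

/-- The generalized fractional transformation `g·U = (A·U + B)(C·U + D)⁻¹`. -/
def ballAct (g : Matrix (Fin 3) (Fin 3) ℂ) (U : Matrix (Fin 2) (Fin 1) ℂ) :
    Matrix (Fin 2) (Fin 1) ℂ :=
  ((blockC g * U) 0 0 + blockD g)⁻¹ • (blockA g * U + blockB g)

end

/-!
The Hermitian form `|z₀|² + |z₁|² - |z₂|²` defined by `J₀` is preserved by `g`. In homogeneous
coordinates `U ↦ (U, 1)` the ball is the set of negative vectors, and `g` sends `(U, 1)` to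
`(A U + B, C U + D)`, which is therefore negative again. Negativity forces the last coordinate
`C U + D` to be nonzero, and rescaling by it shows that `g · U` lies in the ball.
-/

open Complex

theorem star_mulVec_dotProduct_mulVec_mulVec {n R : Type*} [Fintype n]
    [CommRing R] [StarRing R] {J g : Matrix n n R} (hg : gᴴ * J * g = J) (v : n → R) :
    star (g *ᵥ v) ⬝ᵥ (J *ᵥ (g *ᵥ v)) = star v ⬝ᵥ (J *ᵥ v) := by
  rw [star_mulVec, ← dotProduct_mulVec, mulVec_mulVec, mulVec_mulVec, hg]

def signatureForm (v : Fin 3 → ℂ) : ℝ := normSq (v 0) + normSq (v 1) - normSq (v 2)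

theorem star_dotProduct_J0_mulVec (v : Fin 3 → ℂ) :
    star v ⬝ᵥ (J0 *ᵥ v) = signatureForm v := by
  simp only [dotProduct, Pi.star_apply, RCLike.star_def, J0, mulVec_diagonal, mul_comm,
    Fin.sum_univ_three, Fin.isValue, cons_val_zero, one_mul, mul_conj, cons_val_one, cons_val,
    neg_mul, signatureForm, ofReal_sub, ofReal_add]
  ring

def homogenize (U : Matrix (Fin 2) (Fin 1) ℂ) : Fin 3 → ℂ := ![U 0 0, U 1 0, 1]

theorem mulVec_homogenize (g : Matrix (Fin 3) (Fin 3) ℂ) (U : Matrix (Fin 2) (Fin 1) ℂ) :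
    g *ᵥ homogenize U =
      ![(blockA g * U + blockB g) 0 0, (blockA g * U + blockB g) 1 0,
        (blockC g * U) 0 0 + blockD g] := by
  ext i
  fin_cases i <;>
    simp [homogenize, blockA, blockB, blockC, blockD, mulVec, dotProduct, mul_apply,
      Fin.sum_univ_three, Fin.sum_univ_two]

theorem signatureForm_mulVec_homogenize (g : Matrix (Fin 3) (Fin 3) ℂ)
    (U : Matrix (Fin 2) (Fin 1) ℂ) :
    signatureForm (g *ᵥ homogenize U) =
      normSq ((blockA g * U + blockB g) 0 0) + normSq ((blockA g * U + blockB g) 1 0)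
        - normSq ((blockC g * U) 0 0 + blockD g) := by
  rw [mulVec_homogenize]
  rfl

theorem signatureForm_homogenize (U : Matrix (Fin 2) (Fin 1) ℂ) :
    signatureForm (homogenize U) = normSq (U 0 0) + normSq (U 1 0) - 1 := by
  simp [signatureForm, homogenize]

theorem inBall_iff_normSq (U : Matrix (Fin 2) (Fin 1) ℂ) :
    inBall U ↔ normSq (U 0 0) + normSq (U 1 0) < 1 := by
  simp [inBall, mul_apply, Fin.sum_univ_two, Complex.normSq_apply, mul_comm]

theorem inBall_inv_smul_iff {V : Matrix (Fin 2) (Fin 1) ℂ} {c : ℂ} (hc : c ≠ 0) :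
    inBall (c⁻¹ • V) ↔ normSq (V 0 0) + normSq (V 1 0) < normSq c := by
  rw [inBall_iff_normSq]
  simp only [Matrix.smul_apply, smul_eq_mul, normSq_mul, normSq_inv, ← mul_add]
  rw [inv_mul_lt_iff₀ (normSq_pos.2 hc), mul_one]

/-- For `g ∈ SU(2,1)` and `U ∈ 𝒟_{2,1}`, the scalar `C·U + D` is nonzero and
`(A·U + B)(C·U + D)⁻¹` lies again in `𝒟_{2,1}`: the generalized fractional transformation
is a well-defined self-map of the ball. -/
theorem hecke_stmt6 (g : Matrix (Fin 3) (Fin 3) ℂ) (hg : g ∈ SU21)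
    (U : Matrix (Fin 2) (Fin 1) ℂ) (hU : inBall U) :
    (blockC g * U) 0 0 + blockD g ≠ 0 ∧ inBall (ballAct g U) := by
  have hform : signatureForm (g *ᵥ homogenize U) = signatureForm (homogenize U) := by
    have := star_mulVec_dotProduct_mulVec_mulVec hg.1 (homogenize U)
    rwa [star_dotProduct_J0_mulVec, star_dotProduct_J0_mulVec, ofReal_inj] at this
  rw [signatureForm_mulVec_homogenize, signatureForm_homogenize] at hform
  rw [inBall_iff_normSq] at hU
  have hlt : normSq ((blockA g * U + blockB g) 0 0) + normSq ((blockA g * U + blockB g) 1 0)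
      < normSq ((blockC g * U) 0 0 + blockD g) := by linarith
  have hne : (blockC g * U) 0 0 + blockD g ≠ 0 :=
    normSq_pos.1 ((add_nonneg (normSq_nonneg _) (normSq_nonneg _)).trans_lt hlt)
  exact ⟨hne, (inBall_inv_smul_iff hne).2 hlt⟩
end

section
/- The action of SU(2,1) on the ball 𝒟_{2,1} by generalized fractional transformations is transitive: for every U ∈ 𝒟_{2,1} there exists g ∈ SU(2,1) with g·0 = U, i.e., writing g = [[A, B], [C, D]] in block form, D ≠ 0 and B·D⁻¹ = U. -/
open Matrix

/-!
With `t = (1 - |U|²)^{-1/2}`, the Lorentz boost `g = [[1 + t²/(t+1) U Uᴴ, t U], [t Uᴴ, t]]` has last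
column `t (U, 1)`, so `g·0 = U`. It is Hermitian, and since `(U Uᴴ)² = |U|² U Uᴴ` the identity
`gᴴ J₀ g = J₀` reduces to scalar identities in `t`; its determinant is `1` by the
Weinstein–Aronszajn identity applied to the Schur complement of the block `t`.
-/

variable {𝕜 : Type*} [RCLike 𝕜] {n m : Type*} [Fintype n] [DecidableEq n] [Fintype m]
  [DecidableEq m]

noncomputable def lorentzBoost (c : Matrix n m 𝕜) (t : ℝ) : Matrix (n ⊕ m) (n ⊕ m) 𝕜 :=
  fromBlocks (1 + (t ^ 2 / (t + 1)) • (c * cᴴ)) (t • c) (t • cᴴ) (t • 1)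

def indefiniteSpecialUnitary (n : Type*) [Fintype n] [DecidableEq n] (𝕜 : Type*) [RCLike 𝕜] :
    Set (Matrix (n ⊕ Fin 1) (n ⊕ Fin 1) 𝕜) :=
  {g | gᴴ * fromBlocks 1 0 0 (-1) * g = fromBlocks 1 0 0 (-1) ∧ g.det = 1}

omit [Fintype n] in
theorem conjTranspose_lorentzBoost (c : Matrix n m 𝕜) (t : ℝ) :
    (lorentzBoost c t)ᴴ = lorentzBoost c t := by
  simp [lorentzBoost, fromBlocks_conjTranspose, conjTranspose_smul]

theorem sq_div_add_one_mul_eq_sub_one {q t : ℝ} (ht : t ^ 2 * (1 - q) = 1) (ht0 : 0 ≤ t) :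
    t ^ 2 / (t + 1) * q = t - 1 := by
  have hs : t ^ 2 / (t + 1) * (t + 1) = t ^ 2 := div_mul_cancel₀ _ (by positivity)
  exact mul_right_cancel₀ (by positivity : t + 1 ≠ 0) (by linear_combination q * hs - ht)

section Boost

variable {c : Matrix n m 𝕜} {q t : ℝ}

theorem conjTranspose_lorentzBoost_mul_fromBlocks_mul_self (hc : cᴴ * c = q • 1)
    (ht : t ^ 2 * (1 - q) = 1) (ht0 : 0 ≤ t) :
    (lorentzBoost c t)ᴴ * fromBlocks 1 0 0 (-1) * lorentzBoost c t = fromBlocks 1 0 0 (-1) := by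
  have hsq := sq_div_add_one_mul_eq_sub_one ht ht0
  set s := t ^ 2 / (t + 1) with hs_def
  have hs : s * (t + 1) = t ^ 2 := div_mul_cancel₀ _ (by positivity)
  have hP : c * cᴴ * (c * cᴴ) = q • (c * cᴴ) := by
    rw [Matrix.mul_assoc, ← Matrix.mul_assoc cᴴ, hc, Matrix.smul_mul, Matrix.one_mul,
      Matrix.mul_smul]
  have hPc : c * cᴴ * c = q • c := by rw [Matrix.mul_assoc, hc, Matrix.mul_smul, Matrix.mul_one]
  have hcP : cᴴ * (c * cᴴ) = q • cᴴ := by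
    rw [← Matrix.mul_assoc, hc, Matrix.smul_mul, Matrix.one_mul]
  rw [conjTranspose_lorentzBoost, lorentzBoost, ← hs_def]
  simp only [fromBlocks_multiply, fromBlocks_inj, Matrix.mul_add, Matrix.add_mul, Matrix.mul_one,
    Matrix.one_mul, Matrix.mul_zero, Matrix.mul_neg, Matrix.neg_mul, Matrix.smul_mul, Matrix.mul_smul,
    add_zero, zero_add, hP, hPc, hcP, hc]
  refine ⟨?_, ?_, ?_, ?_⟩
  · linear_combination (norm := module) (s * hsq + hs) • (c * cᴴ : Matrix n n 𝕜)
  · linear_combination (norm := module) (t * hsq) • c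
  · linear_combination (norm := module) (t * hsq) • cᴴ
  · linear_combination (norm := module) (-ht) • (1 : Matrix m m 𝕜)

theorem det_lorentzBoost (hc : cᴴ * c = q • 1) (ht : t ^ 2 * (1 - q) = 1) (ht0 : 0 ≤ t) :
    (lorentzBoost c t).det = 1 := by
  have hsq := sq_div_add_one_mul_eq_sub_one ht ht0
  set s := t ^ 2 / (t + 1) with hs_def
  have hfactor : lorentzBoost c t =
      fromBlocks 1 c 0 1 * fromBlocks (1 + (s - t) • (c * cᴴ)) 0 (t • cᴴ) (t • 1) := by
    simp only [lorentzBoost, fromBlocks_multiply, Matrix.one_mul, Matrix.zero_mul,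
      Matrix.mul_smul, Matrix.mul_one, zero_add]
    congr 1
    module
  have hschur : (1 + (s - t) • (c * cᴴ)).det = ((1 + (s - t) * q : ℝ) : 𝕜) ^ Fintype.card m := by
    have hscalar : (1 : Matrix m m 𝕜) + ((s - t) * q) • 1 = ((1 + (s - t) * q : ℝ) : 𝕜) • 1 := by
      rw [← RCLike.real_smul_eq_coe_smul, add_smul, one_smul]
    rw [← Matrix.smul_mul, det_one_add_mul_comm, Matrix.mul_smul, hc, smul_smul, hscalar, det_smul,
      det_one, mul_one]
  have hunit : (1 + (s - t) * q) * t = 1 := by linear_combination t * hsq + ht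
  rw [hfactor, det_mul, det_fromBlocks_zero₂₁, det_fromBlocks_zero₁₂, hschur,
    RCLike.real_smul_eq_coe_smul (K := 𝕜), det_smul]
  simp only [det_one, one_mul, mul_one]
  rw [← mul_pow, ← RCLike.ofReal_mul, hunit, RCLike.ofReal_one, one_pow]

end Boost

omit [DecidableEq n] in
theorem conjTranspose_mul_self_eq_re_smul_one (U : Matrix n (Fin 1) 𝕜) :
    Uᴴ * U = RCLike.re ((Uᴴ * U) 0 0) • (1 : Matrix (Fin 1) (Fin 1) 𝕜) := by
  have hreal : (RCLike.re ((Uᴴ * U) 0 0) : 𝕜) = (Uᴴ * U) 0 0 :=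
    RCLike.conj_eq_iff_re.mp (congrFun₂ (isHermitian_conjTranspose_mul_self U) 0 0)
  ext i j
  fin_cases i; fin_cases j
  simp [RCLike.real_smul_eq_coe_smul (K := 𝕜), hreal]

theorem exists_mem_indefiniteSpecialUnitary_inv_smul_toBlocks₁₂_eq (U : Matrix n (Fin 1) 𝕜)
    (hU : RCLike.re ((Uᴴ * U) 0 0) < 1) :
    ∃ g ∈ indefiniteSpecialUnitary n 𝕜,
      g.toBlocks₂₂ 0 0 ≠ 0 ∧ (g.toBlocks₂₂ 0 0)⁻¹ • g.toBlocks₁₂ = U := by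
  set q := RCLike.re ((Uᴴ * U) 0 0)
  have hc := conjTranspose_mul_self_eq_re_smul_one U
  set t := (√(1 - q))⁻¹
  have ht0 : 0 < t := inv_pos.mpr (Real.sqrt_pos.mpr (by linarith))
  have ht : t ^ 2 * (1 - q) = 1 := by
    rw [inv_pow, Real.sq_sqrt (by linarith), inv_mul_cancel₀ (by linarith)]
  have htne : (t : 𝕜) ≠ 0 := RCLike.ofReal_ne_zero.mpr ht0.ne'
  have hD : (lorentzBoost U t).toBlocks₂₂ 0 0 = t := by
    rw [lorentzBoost, toBlocks_fromBlocks₂₂, Matrix.smul_apply, one_apply_eq,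
      RCLike.real_smul_eq_coe_smul (K := 𝕜), smul_eq_mul, mul_one]
  refine ⟨lorentzBoost U t, ⟨conjTranspose_lorentzBoost_mul_fromBlocks_mul_self hc ht ht0.le,
    det_lorentzBoost hc ht ht0.le⟩, hD ▸ htne, ?_⟩
  rw [hD, lorentzBoost, toBlocks_fromBlocks₁₂, RCLike.real_smul_eq_coe_smul (K := 𝕜), smul_smul,
    inv_mul_cancel₀ htne, one_smul]

theorem J0_eq_reindex_fromBlocks : J0 = reindex (m := Fin 2 ⊕ Fin 1) (n := Fin 2 ⊕ Fin 1)
    finSumFinEquiv finSumFinEquiv (fromBlocks 1 0 0 (-1)) := by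
  ext i j
  fin_cases i <;> fin_cases j <;> rfl

theorem reindex_mem_SU21 {g : Matrix (Fin 2 ⊕ Fin 1) (Fin 2 ⊕ Fin 1) ℂ}
    (hg : g ∈ indefiniteSpecialUnitary (Fin 2) ℂ) :
    reindex finSumFinEquiv finSumFinEquiv g ∈ SU21 := by
  refine ⟨?_, by rw [det_reindex_self, hg.2]⟩
  rw [J0_eq_reindex_fromBlocks, conjTranspose_reindex]
  simp only [reindex_apply, submatrix_mul_equiv, hg.1]

/-- The action of SU(2,1) on `𝒟_{2,1}` is transitive: every `U ∈ 𝒟_{2,1}` is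
of the form `g·0 = B·D⁻¹` for some `g ∈ SU(2,1)` (with `D ≠ 0`). -/
theorem hecke_stmt8 (U : Matrix (Fin 2) (Fin 1) ℂ) (hU : inBall U) :
    ∃ g ∈ SU21, blockD g ≠ 0 ∧ (blockD g)⁻¹ • blockB g = U := by
  obtain ⟨g, hg, hD, hB⟩ := exists_mem_indefiniteSpecialUnitary_inv_smul_toBlocks₁₂_eq U hU
  have hBg : blockB (reindex finSumFinEquiv finSumFinEquiv g) = g.toBlocks₁₂ := by
    ext i j
    fin_cases i <;> fin_cases j <;> rfl
  exact ⟨_, reindex_mem_SU21 hg, hD, hBg ▸ hB⟩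
end
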